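/- arXiv:2206.10508 — 5 statements merged into one kernel-verified Lean document; each statement's English description precedes it below -/
import Mathlib

section
/- Let I ⊆ ℕ be a set with lower asymptotic density d(I) > 0. For m ≥ 1 set q_m = ⌊m·d(I)/2⌋ and I^m = {k ∈ ℕ : #([km, (k+1)m) ∩ I) > q_m}. Then the lower asymptotic density of I^m is at least d(I)/2. -/
open Filter

/-- Lower asymptotic density of a set of natural numbers:
`liminf_n #(E ∩ [1,n]) / n`. -/
noncomputable def lowerDensity (E : Set ℕ) : ℝ :=
  Filter.liminf (fun n : ℕ => (Nat.card ↥(E ∩ Set.Icc 1 n) : ℝ) / n) Filter.atTop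

lemma ncard_Ico_nat (a b : ℕ) : (Set.Ico a b).ncard = b - a := by
  rw [← Finset.coe_Ico, Set.ncard_coe_finset, Nat.card_Ico]

lemma ncard_inter_Ico_le (I : Set ℕ) (a b : ℕ) : (I ∩ Set.Ico a b).ncard ≤ b - a := by
  calc (I ∩ Set.Ico a b).ncard ≤ (Set.Ico a b).ncard :=
        Set.ncard_le_ncard Set.inter_subset_right (Set.finite_Ico a b)
    _ = b - a := ncard_Ico_nat a b

lemma blocks (I : Set ℕ) (m : ℕ) (n : ℕ) :
    (I ∩ Set.Ico 0 (n * m)).ncard ≤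
      ∑ k ∈ Finset.range n, (I ∩ Set.Ico (k * m) ((k + 1) * m)).ncard := by
  induction n with
  | zero => simp
  | succ n ih =>
    have hsplit : Set.Ico 0 ((n + 1) * m) = Set.Ico 0 (n * m) ∪ Set.Ico (n * m) ((n + 1) * m) := by
      rw [Set.Ico_union_Ico_eq_Ico (Nat.zero_le _) (Nat.mul_le_mul_right m (Nat.le_succ n))]
    rw [hsplit, Set.inter_union_distrib_left, Finset.sum_range_succ]
    exact le_trans (Set.ncard_union_le _ _) (Nat.add_le_add ih le_rfl)

lemma sum_split (f : ℕ → ℕ) (q m n : ℕ) (hf : ∀ k, f k ≤ m) [DecidablePred fun k => q < f k] :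
    ∑ k ∈ Finset.range n, f k ≤
      q * n + m * ((Finset.range n).filter (fun k => q < f k)).card := by
  calc ∑ k ∈ Finset.range n, f k
      ≤ ∑ k ∈ Finset.range n, (q + if q < f k then m else 0) := by
        refine Finset.sum_le_sum fun k _ => ?_
        by_cases h : q < f k
        · simp only [h, if_true]; exact le_trans (hf k) (Nat.le_add_left m q)
        · simp only [h, if_false]; omega
    _ = q * n + m * ((Finset.range n).filter (fun k => q < f k)).card := by
        rw [Finset.sum_add_distrib, Finset.sum_const, Finset.card_range, smul_eq_mul,
          ← Finset.sum_filter, Finset.sum_const, smul_eq_mul]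
        ring

lemma filter_card_le (P : ℕ → Prop) [DecidablePred P] (n : ℕ) :
    ((Finset.range (n + 1)).filter P).card ≤ ({k | P k} ∩ Set.Icc 1 n).ncard + 1 := by
  have hsub : (Finset.range (n + 1)).filter P ⊆ insert 0 ((Finset.Icc 1 n).filter P) := by
    intro k hk
    simp only [Finset.mem_filter, Finset.mem_range, Finset.mem_insert, Finset.mem_Icc] at *
    rcases Nat.eq_zero_or_pos k with h | h
    · exact Or.inl h
    · exact Or.inr ⟨⟨h, by omega⟩, hk.2⟩
  have h1 := Finset.card_le_card hsub
  have h2 := Finset.card_insert_le 0 ((Finset.Icc 1 n).filter P)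
  have h3 : ({k | P k} ∩ Set.Icc 1 n).ncard = ((Finset.Icc 1 n).filter P).card := by
    rw [← Set.ncard_coe_finset]
    congr 1
    ext k
    simp [Set.mem_setOf_eq, and_comm]
  omega

lemma density_term_le_one (S : Set ℕ) (n : ℕ) :
    ((S ∩ Set.Icc 1 n).ncard : ℝ) / n ≤ 1 := by
  rcases Nat.eq_zero_or_pos n with h | h
  · simp [h]
  · rw [div_le_one (by exact_mod_cast h)]
    have hcard : (S ∩ Set.Icc 1 n).ncard ≤ n := by
      calc (S ∩ Set.Icc 1 n).ncard ≤ (Set.Icc 1 n).ncard :=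
            Set.ncard_le_ncard Set.inter_subset_right (Set.finite_Icc 1 n)
        _ = n := by rw [← Finset.coe_Icc, Set.ncard_coe_finset, Nat.card_Icc]; omega
    exact_mod_cast hcard

theorem lowerDensity_Im_ge (I : Set ℕ) (hI : 0 < lowerDensity I) (m : ℕ) (hm : 1 ≤ m) :
    lowerDensity {k : ℕ | (⌊(m : ℝ) * lowerDensity I / 2⌋₊ : ℕ)
        < Nat.card ↥(I ∩ Set.Ico (k * m) ((k + 1) * m))}
      ≥ lowerDensity I / 2 := by
  classical
  simp only [Nat.card_coe_set_eq]
  set d : ℝ := lowerDensity I with hd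
  set q : ℕ := ⌊(m : ℝ) * d / 2⌋₊ with hqdef
  set P : ℕ → Prop := fun k => q < (I ∩ Set.Ico (k * m) ((k + 1) * m)).ncard with hPdef
  set f : ℕ → ℕ := fun k => (I ∩ Set.Ico (k * m) ((k + 1) * m)).ncard with hfdef
  have hfm : ∀ k, f k ≤ m := by
    intro k
    show (I ∩ Set.Ico (k * m) ((k + 1) * m)).ncard ≤ m
    have h1 := ncard_inter_Ico_le I (k * m) ((k + 1) * m)
    have h : (k + 1) * m = k * m + m := by rw [Nat.add_mul, one_mul]
    omega
  -- the liminf expressions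
  set u : ℕ → ℝ := fun n => (({k | P k} ∩ Set.Icc 1 n).ncard : ℝ) / n with hudef
  set v : ℕ → ℝ := fun n => ((I ∩ Set.Icc 1 n).ncard : ℝ) / n with hvdef
  have hdv : d = liminf v atTop := by
    rw [hd, lowerDensity]; simp only [Nat.card_coe_set_eq, hvdef]
  have hgoal : lowerDensity {k | P k} = liminf u atTop := by
    rw [lowerDensity]; simp only [Nat.card_coe_set_eq, hudef]
  rw [ge_iff_le, hgoal]
  -- coboundedness facts
  have hub : ∀ n, u n ≤ 1 := fun n => density_term_le_one _ n
  have hvnonneg : ∀ n, 0 ≤ v n := fun n => by positivity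
  have hcobdd : IsCoboundedUnder (· ≥ ·) atTop u :=
    IsBoundedUnder.isCoboundedUnder_ge (isBoundedUnder_of ⟨1, hub⟩)
  have hvbdd : IsBoundedUnder (· ≥ ·) atTop v := isBoundedUnder_of ⟨0, hvnonneg⟩
  refine le_of_forall_pos_le_add fun ε hε => ?_
  have key : d / 2 - ε ≤ liminf u atTop := by
    refine le_liminf_of_le hcobdd ?_
    have hv : ∀ᶠ N in atTop, d - ε / 2 < v N :=
      eventually_lt_of_lt_liminf (by rw [← hdv]; linarith) hvbdd
    obtain ⟨N₀, hN₀⟩ := eventually_atTop.mp hv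
    set N₁ : ℕ := max (max N₀ 1) ⌈(d / 2 + 1) / (ε / 2)⌉₊ with hN₁
    filter_upwards [eventually_ge_atTop N₁] with n hn
    have hn1 : 1 ≤ n := le_trans (le_trans (le_max_right N₀ 1) (le_max_left _ _)) hn
    have hnN₀ : N₀ ≤ n := le_trans (le_trans (le_max_left N₀ 1) (le_max_left _ _)) hn
    have hnceil : (⌈(d / 2 + 1) / (ε / 2)⌉₊ : ℕ) ≤ n := le_trans (le_max_right _ _) hn
    have hnm : N₀ ≤ n * m := le_trans hnN₀ (Nat.le_mul_of_pos_right n hm)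
    have hv2 : d - ε / 2 < v (n * m) := hN₀ _ hnm
    -- the natural number counting chain
    set B : ℕ := ({k | P k} ∩ Set.Icc 1 n).ncard with hB
    set C : ℕ := (I ∩ Set.Icc 1 (n * m)).ncard with hC
    have hchain : C ≤ q * (n + 1) + m * (B + 1) := by
      have h1 : C ≤ (I ∩ Set.Ico 0 ((n + 1) * m)).ncard := by
        refine Set.ncard_le_ncard ?_ ((Set.finite_Ico _ _).inter_of_right _)
        refine Set.inter_subset_inter_right I ?_
        intro x hx
        simp only [Set.mem_Icc, Set.mem_Ico] at *
        have h : (n + 1) * m = n * m + m := by rw [Nat.add_mul, one_mul]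
        omega
      have h2 : (I ∩ Set.Ico 0 ((n + 1) * m)).ncard ≤ ∑ k ∈ Finset.range (n + 1), f k :=
        blocks I m (n + 1)
      have h3 : ∑ k ∈ Finset.range (n + 1), f k ≤
          q * (n + 1) + m * ((Finset.range (n + 1)).filter P).card :=
        sum_split f q m (n + 1) hfm
      have h4 := filter_card_le P n
      have h5 : m * ((Finset.range (n + 1)).filter P).card ≤ m * (B + 1) :=
        Nat.mul_le_mul_left m h4
      exact le_trans h1 (le_trans h2 (le_trans h3 (Nat.add_le_add_left h5 _)))
    -- move to the reals
    have hmpos : (0 : ℝ) < m := by exact_mod_cast hm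
    have hnpos : (0 : ℝ) < n := by exact_mod_cast hn1
    have hnmpos : (0 : ℝ) < ((n * m : ℕ) : ℝ) := by positivity
    have hcR : (d - ε / 2) * ((n : ℝ) * m) ≤ (C : ℝ) := by
      have := hv2
      rw [hvdef] at this
      have h' := (le_div_iff₀ hnmpos).mp (le_of_lt this)
      push_cast at h' ⊢
      linarith
    have hqR : (q : ℝ) ≤ (m : ℝ) * d / 2 := Nat.floor_le (by positivity)
    have hCr : (C : ℝ) ≤ (q : ℝ) * ((n : ℝ) + 1) + (m : ℝ) * ((B : ℝ) + 1) := by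
      exact_mod_cast hchain
    have hkey : (m : ℝ) * ((d - ε / 2) * n) ≤ (m : ℝ) * ((d / 2) * ((n : ℝ) + 1) + ((B : ℝ) + 1)) := by
      nlinarith [mul_le_mul_of_nonneg_right hqR (show (0 : ℝ) ≤ (n : ℝ) + 1 by positivity)]
    have hkey2 : (d - ε / 2) * n ≤ (d / 2) * ((n : ℝ) + 1) + ((B : ℝ) + 1) :=
      le_of_mul_le_mul_left hkey hmpos
    have hεn : d / 2 + 1 ≤ (ε / 2) * n := by
      have h1 : (d / 2 + 1) / (ε / 2) ≤ (n : ℝ) :=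
        le_trans (Nat.le_ceil _) (by exact_mod_cast hnceil)
      have h2 := (div_le_iff₀ (by positivity : (0 : ℝ) < ε / 2)).mp h1
      linarith
    show d / 2 - ε ≤ (B : ℝ) / n
    rw [le_div_iff₀ hnpos]
    linarith
  linarith
end

section
/- For any integer A ≥ 2 and any m ≥ 1, let σ be the shift on 𝒜^ℕ where #𝒜 = A, and σ'' the shift on (Δ_{A^m})^ℕ. Then the map f_m: (Δ_{A^m})^ℕ → M(𝒜^ℕ) sending (a_n)_{n∈ℕ} to the push-forward under the block-identification π: (𝒜^m)^ℕ ≅ 𝒜^ℕ of the product measure μ_{a_1} × μ_{a_2} × ⋯ is a continuous injective map satisfying f_m ∘ σ'' = σ_*^m ∘ f_m. -/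
/-! The product measure `μ_{a_0} × μ_{a_1} × ⋯` on `(𝒜^m)^ℕ` is `Measure.infinitePi`, and `f_m` is
its push-forward under block concatenation `π`. The cylinder formula is the product formula for
boxes. Injectivity: the `n`-th block of a sample of `f_m a` has law `a_n`. Equivariance: shifting
by `m` letters after concatenating is concatenating after shifting by one block, and pushing a
product measure along a reindexing gives the reindexed product. Continuity: cylinders form a
π-system of clopen sets which is a basis of the topology of `𝒜^ℕ`; the measure of a cylinder is a
finite product of the continuous maps `μ ↦ μ {s}`, and by the portmanteau theorem convergence on
such a π-system is weak convergence. -/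

open MeasureTheory Function Set

namespace MeasureTheory

theorem Measure.infinitePi_map_comp_injective {ι κ X : Type*} [MeasurableSpace X]
    (μ : κ → Measure X) [∀ k, IsProbabilityMeasure (μ k)] {e : ι → κ} (he : Injective e) :
    (Measure.infinitePi μ).map (fun x i ↦ x (e i)) = Measure.infinitePi fun i ↦ μ (e i) := by
  refine Measure.eq_infinitePi _ fun s t ht ↦ ?_
  classical
  set t' : κ → Set X := Function.extend e t fun _ ↦ univ
  have ht' : ∀ k, MeasurableSet (t' k) := by
    intro k
    by_cases hk : ∃ i, e i = k
    · obtain ⟨i, rfl⟩ := hk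
      simpa [t', he.extend_apply] using ht i
    · simp [t', extend_apply' _ _ _ hk]
  have hpre : (fun (x : κ → X) i ↦ x (e i)) ⁻¹' (s : Set ι).pi t =
      ((s.map ⟨e, he⟩ : Finset κ) : Set κ).pi t' := by
    ext x
    simp [t', he.extend_apply]
  rw [Measure.map_apply (by fun_prop) (.pi s.countable_toSet fun i _ ↦ ht i), hpre,
    Measure.infinitePi_pi _ fun k _ ↦ ht' k, Finset.prod_map]
  simp [t', he.extend_apply]

namespace ProbabilityMeasure

variable {ι : Type*} {X : ι → Type*} [∀ i, MeasurableSpace (X i)]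

noncomputable def infinitePi (μ : ∀ i, ProbabilityMeasure (X i)) :
    ProbabilityMeasure (∀ i, X i) :=
  ⟨Measure.infinitePi fun i ↦ (μ i : Measure (X i)), inferInstance⟩

@[simp]
theorem toMeasure_infinitePi (μ : ∀ i, ProbabilityMeasure (X i)) :
    (infinitePi μ : Measure (∀ i, X i)) = Measure.infinitePi fun i ↦ (μ i : Measure (X i)) :=
  rfl

end ProbabilityMeasure

end MeasureTheory

theorem PiNat.isPiSystem_cylinders {E : ℕ → Type*} :
    IsPiSystem {s : Set (∀ n, E n) | ∃ x n, s = PiNat.cylinder x n} := by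
  rintro _ ⟨x, n, rfl⟩ _ ⟨y, k, rfl⟩ ⟨z, hzx, hzy⟩
  rw [← PiNat.mem_cylinder_iff_eq.1 hzx, ← PiNat.mem_cylinder_iff_eq.1 hzy]
  rcases le_total n k with h | h
  · exact ⟨z, k, inter_eq_right.2 (PiNat.cylinder_anti z h)⟩
  · exact ⟨z, n, inter_eq_left.2 (PiNat.cylinder_anti z h)⟩

namespace MeasureTheory.ProbabilityMeasure

variable {X : ℕ → Type*} [∀ n, MeasurableSpace (X n)]

theorem infinitePi_apply_cylinder [∀ n, MeasurableSingletonClass (X n)]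
    (μ : ∀ n, ProbabilityMeasure (X n)) (x : ∀ n, X n) (n : ℕ) :
    infinitePi μ (PiNat.cylinder x n) = ∏ i ∈ Finset.range n, μ i {x i} := by
  rw [← ENNReal.coe_inj, ennreal_coeFn_eq_coeFn_toMeasure, PiNat.cylinder_eq_pi,
    toMeasure_infinitePi, Measure.infinitePi_pi _ fun i _ ↦ measurableSet_singleton (x i)]
  simp

theorem continuous_infinitePi [∀ n, TopologicalSpace (X n)] [∀ n, DiscreteTopology (X n)]
    [∀ n, Countable (X n)] [∀ n, BorelSpace (X n)] :
    Continuous (infinitePi : (∀ n, ProbabilityMeasure (X n)) → ProbabilityMeasure (∀ n, X n)) := by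
  rw [continuous_iff_continuousAt]
  intro μ
  refine PiNat.isPiSystem_cylinders.tendsto_probabilityMeasure_of_tendsto_of_mem ?_ ?_ ?_
  · rintro _ ⟨x, n, rfl⟩
    exact (PiNat.isOpen_cylinder X x n).measurableSet
  · intro u hu x hx
    obtain ⟨s, hs, hxs, hsu⟩ :=
      (PiNat.isTopologicalBasis_cylinders X).exists_subset_of_mem_open hx hu
    exact ⟨s, hs, ((PiNat.isTopologicalBasis_cylinders X).isOpen hs).mem_nhds hxs, hsu⟩
  · rintro _ ⟨x, n, rfl⟩
    simp_rw [infinitePi_apply_cylinder]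
    exact tendsto_finsetProd _ fun i _ ↦
      tendsto_measure_of_isClopen_of_tendsto ((continuous_apply i).tendsto μ)
        (isClopen_discrete _)

end MeasureTheory.ProbabilityMeasure

section Blocks

variable {α : Type*}

def block (m n : ℕ) (y : ℕ → α) : Fin m → α :=
  fun i ↦ y (n * m + i)

theorem measurable_block [MeasurableSpace α] {m : ℕ} (n : ℕ) :
    Measurable (block m n (α := α)) := by
  unfold block; fun_prop

variable (m : ℕ) [NeZero m]

def blockConcat (x : ℕ → Fin m → α) : ℕ → α :=
  fun i ↦ x (i / m) ⟨i % m, Nat.mod_lt i (NeZero.pos m)⟩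

variable {m}

theorem blockConcat_mul_add (x : ℕ → Fin m → α) (j : ℕ) (i : Fin m) :
    blockConcat m x (j * m + i) = x j i := by
  have hdiv : (j * m + i) / m = j := by
    rw [mul_comm, Nat.mul_add_div (NeZero.pos m), Nat.div_eq_of_lt i.isLt, add_zero]
  have hmod : (j * m + i) % m = i := by
    rw [mul_comm, Nat.mul_add_mod, Nat.mod_eq_of_lt i.isLt]
  simp only [blockConcat, hdiv, hmod]

theorem block_blockConcat (x : ℕ → Fin m → α) (n : ℕ) : block m n (blockConcat m x) = x n :=
  funext (blockConcat_mul_add x n)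

theorem blockConcat_add (x : ℕ → Fin m → α) (i : ℕ) :
    blockConcat m x (i + m) = blockConcat m (fun j ↦ x (j + 1)) i := by
  simp [blockConcat, Nat.add_div_right i (NeZero.pos m)]

theorem continuous_blockConcat [TopologicalSpace α] : Continuous (blockConcat m (α := α)) := by
  unfold blockConcat; fun_prop

theorem measurable_blockConcat [MeasurableSpace α] : Measurable (blockConcat m (α := α)) := by
  unfold blockConcat; fun_prop

theorem preimage_blockConcat_setOf_block_eq {N : ℕ} (c : Fin N → Fin m → α) :
    blockConcat m ⁻¹' {y | ∀ (j : Fin N) (i : Fin m), y (j * m + i) = c j i} =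
      (fun x (j : Fin N) ↦ x j) ⁻¹' {c} := by
  ext x
  simp [blockConcat_mul_add, funext_iff]

end Blocks

section BlockProductMeasure

variable {α : Type*} [MeasurableSpace α] {m : ℕ} [NeZero m]

variable (m) in
noncomputable def blockProductMeasure (a : ℕ → ProbabilityMeasure (Fin m → α)) :
    ProbabilityMeasure (ℕ → α) :=
  (ProbabilityMeasure.infinitePi a).map measurable_blockConcat.aemeasurable

theorem toMeasure_blockProductMeasure (a : ℕ → ProbabilityMeasure (Fin m → α)) :
    (blockProductMeasure m a : Measure (ℕ → α)) =
      (Measure.infinitePi fun j ↦ (a j : Measure (Fin m → α))).map (blockConcat m) :=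
  ProbabilityMeasure.toMeasure_map _ _

theorem blockProductMeasure_setOf_block_eq [MeasurableSingletonClass α]
    (a : ℕ → ProbabilityMeasure (Fin m → α)) {N : ℕ} (c : Fin N → Fin m → α) :
    blockProductMeasure m a {y | ∀ (j : Fin N) (i : Fin m), y (j * m + i) = c j i} =
      ∏ j : Fin N, a j {c j} := by
  have hmeas : MeasurableSet {y : ℕ → α | ∀ (j : Fin N) (i : Fin m), y (j * m + i) = c j i} := by
    measurability
  rw [← ENNReal.coe_inj, ProbabilityMeasure.ennreal_coeFn_eq_coeFn_toMeasure,
    toMeasure_blockProductMeasure, Measure.map_apply measurable_blockConcat hmeas,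
    preimage_blockConcat_setOf_block_eq,
    ← Measure.map_apply (by fun_prop) (measurableSet_singleton c),
    Measure.infinitePi_map_comp_injective _ Fin.val_injective,
    Measure.infinitePi_singleton_of_fintype]
  simp

theorem map_block_blockProductMeasure (a : ℕ → ProbabilityMeasure (Fin m → α)) (n : ℕ) :
    (blockProductMeasure m a).map (measurable_block n).aemeasurable = a n := by
  apply ProbabilityMeasure.toMeasure_injective
  rw [ProbabilityMeasure.toMeasure_map, toMeasure_blockProductMeasure,
    Measure.map_map (measurable_block n) measurable_blockConcat]
  have : block m n ∘ blockConcat m = fun x : ℕ → Fin m → α ↦ x n :=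
    funext fun x ↦ block_blockConcat x n
  rw [this, Measure.infinitePi_map_eval]

theorem blockProductMeasure_injective : Injective (blockProductMeasure m (α := α)) :=
  fun a b h ↦ funext fun n ↦ by
    rw [← map_block_blockProductMeasure a n, ← map_block_blockProductMeasure b n, h]

theorem blockProductMeasure_shift (a : ℕ → ProbabilityMeasure (Fin m → α)) :
    blockProductMeasure m (fun j ↦ a (j + 1)) =
      (blockProductMeasure m a).map (f := fun (y : ℕ → α) (i : ℕ) ↦ y (i + m))
        (measurable_pi_lambda _ fun i ↦ measurable_pi_apply (i + m)).aemeasurable := by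
  apply ProbabilityMeasure.toMeasure_injective
  rw [ProbabilityMeasure.toMeasure_map, toMeasure_blockProductMeasure,
    toMeasure_blockProductMeasure, Measure.map_map (by fun_prop) measurable_blockConcat,
    ← Measure.infinitePi_map_comp_injective (fun j ↦ (a j : Measure (Fin m → α)))
      (add_left_injective 1),
    Measure.map_map measurable_blockConcat (by fun_prop)]
  congr 1
  funext x i
  exact (blockConcat_add x i).symm

theorem continuous_blockProductMeasure [TopologicalSpace α] [DiscreteTopology α] [Countable α]
    [BorelSpace α] : Continuous (blockProductMeasure m (α := α)) :=
  (ProbabilityMeasure.continuous_map continuous_blockConcat).comp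
    ProbabilityMeasure.continuous_infinitePi

end BlockProductMeasure

theorem block_simplex_embedding_general (A m : ℕ) (hm : 1 ≤ m) :
    ∃ f : (ℕ → ProbabilityMeasure (Fin m → Fin A)) → ProbabilityMeasure (ℕ → Fin A),
      -- f a is the push-forward under concatenation of the product measure
      (∀ (a : ℕ → ProbabilityMeasure (Fin m → Fin A)) (N : ℕ)
          (c : Fin N → (Fin m → Fin A)),
        (f a) {y : ℕ → Fin A | ∀ (j : Fin N) (i : Fin m), y ((j : ℕ) * m + i) = c j i}
          = ∏ j : Fin N, a j {c j}) ∧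
      Continuous f ∧
      Function.Injective f ∧
      -- equivariance: f ∘ σ'' = σ_*^m ∘ f
      (∀ a : ℕ → ProbabilityMeasure (Fin m → Fin A),
        f (fun j => a (j + 1))
          = (f a).map (f := fun (y : ℕ → Fin A) (i : ℕ) => y (i + m))
              (measurable_pi_lambda _ (fun i => measurable_pi_apply (i + m))).aemeasurable) := by
  have : NeZero m := ⟨by omega⟩
  exact ⟨blockProductMeasure m, fun a _ c ↦ blockProductMeasure_setOf_block_eq a c,
    continuous_blockProductMeasure, blockProductMeasure_injective, blockProductMeasure_shift⟩

/-- For the full shift on `A` symbols and block length `m`, the map sending a sequence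
of probability vectors on words of length `m` to the corresponding product measure on
`𝒜^ℕ` (via the concatenation identification) is a continuous injective map intertwining
the shift on `(Δ_{A^m})^ℕ` with `σ_*^m`. The map is characterized on cylinders:
`f(a)` of the cylinder with prescribed first `N` blocks `c₁,…,c_N` equals `∏ⱼ aⱼ({cⱼ})`. -/
theorem block_simplex_embedding (A m : ℕ) (hA : 2 ≤ A) (hm : 1 ≤ m) :
    ∃ f : (ℕ → ProbabilityMeasure (Fin m → Fin A)) → ProbabilityMeasure (ℕ → Fin A),
      -- f a is the push-forward under concatenation of the product measure
      (∀ (a : ℕ → ProbabilityMeasure (Fin m → Fin A)) (N : ℕ)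
          (c : Fin N → (Fin m → Fin A)),
        (f a) {y : ℕ → Fin A | ∀ (j : Fin N) (i : Fin m), y ((j : ℕ) * m + i) = c j i}
          = ∏ j : Fin N, a j {c j}) ∧
      Continuous f ∧
      Function.Injective f ∧
      -- equivariance: f ∘ σ'' = σ_*^m ∘ f
      (∀ a : ℕ → ProbabilityMeasure (Fin m → Fin A),
        f (fun j => a (j + 1))
          = (f a).map (f := fun (y : ℕ → Fin A) (i : ℕ) => y (i + m))
              (measurable_pi_lambda _ (fun i => measurable_pi_apply (i + m))).aemeasurable) :=
  block_simplex_embedding_general A m hm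
end

section
/- For finite open covers A and B of a compact metrizable space X, D(A ∨ B) ≤ D(A) + D(B), where D(A) = min_{B' ≻ A} ord(B') over finite open covers B' refining A, and A ∨ B = {U ∩ V : U ∈ A, V ∈ B}. -/
open scoped Classical

variable {Y : Type*} [TopologicalSpace Y]

/-- A finite open cover of `Y`. -/
def IsFinOpenCover {Y : Type*} [TopologicalSpace Y] (α : Finset (Set Y)) : Prop :=
  (∀ U ∈ α, IsOpen U) ∧ ∀ y : Y, ∃ U ∈ α, y ∈ U

/-- Order of a finite cover: `sup_y (#{U ∈ α | y ∈ U}) − 1`. -/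
noncomputable def coverOrd {Y : Type*} [TopologicalSpace Y] (α : Finset (Set Y)) : ℕ :=
  sSup {c : ℕ | ∃ y : Y, (α.filter (fun U => y ∈ U)).card = c} - 1

/-- `β` refines `α`: every element of `β` is contained in some element of `α`. -/
def Refines {Y : Type*} (β α : Finset (Set Y)) : Prop :=
  ∀ V ∈ β, ∃ U ∈ α, V ⊆ U

/-- `D(α)`: the minimal order of a finite open cover refining `α`. -/
noncomputable def coverD {Y : Type*} [TopologicalSpace Y] (α : Finset (Set Y)) : ℕ :=
  sInf {c : ℕ | ∃ β : Finset (Set Y), IsFinOpenCover β ∧ Refines β α ∧ coverOrd β = c}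

/-!
Pick refinements `γ`, `δ` of `A`, `B` realising `D(A)`, `D(B)`. In a perfectly normal space
every open set is the positivity set of a continuous `g ≥ 0`. Enumerating `γ` as `u₀, …, u_{p-1}`,
the partial sums `P i = g₀ + ⋯ + g_{i-1}` cut `[0, P p x)` into intervals `[P i x, P (i+1) x)`,
nonempty exactly when `x ∈ uᵢ`; do the same with `Q` for `δ`. The open sets `W i j` where the
`i`-th interval of `P` and the `j`-th interval of `Q` overlap refine both covers. At a point `x`,
an overlapping pair is determined by the left endpoint `max (P i x) (Q j x)` of the overlap, which
is the left endpoint of a nonempty interval of `P` or of `Q`, and `0` is one of both. So if `x`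
lies in `m` members of `γ` and `n` of `δ`, it lies in at most `m + n - 1` sets `W i j`.
-/

open Finset

section Staircase

variable {α : Type*} [LinearOrder α]

def jumpIndices (P : ℕ → α) (p : ℕ) : Finset ℕ :=
  {i ∈ range p | P i < P (i + 1)}

def overlapIndices (P Q : ℕ → α) (p q : ℕ) : Finset (ℕ × ℕ) :=
  {ij ∈ range p ×ˢ range q | max (P ij.1) (Q ij.2) < min (P (ij.1 + 1)) (Q (ij.2 + 1))}

variable {P Q : ℕ → α} {p q : ℕ}

theorem Monotone.exists_first_jump (hP : Monotone P) (h : P 0 < P p) :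
    ∃ i < p, P i = P 0 ∧ P 0 < P (i + 1) := by
  have hex : ∃ n, P 0 < P n := ⟨p, h⟩
  obtain ⟨i, hi⟩ : ∃ i, Nat.find hex = i + 1 :=
    Nat.exists_eq_add_one_of_ne_zero fun h0 => (Nat.find_spec hex).ne (by rw [h0])
  refine ⟨i, ?_, ?_, hi ▸ Nat.find_spec hex⟩
  · have := Nat.find_min' hex h
    omega
  · exact le_antisymm (not_lt.1 (Nat.find_min hex (by omega))) (hP i.zero_le)

theorem overlapIndices_nonempty (hP : Monotone P) (hQ : Monotone Q) (h0 : P 0 = Q 0)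
    (hp : P 0 < P p) (hq : Q 0 < Q q) : (overlapIndices P Q p q).Nonempty := by
  obtain ⟨i, hip, hPi, hPi'⟩ := hP.exists_first_jump hp
  obtain ⟨j, hjq, hQj, hQj'⟩ := hQ.exists_first_jump hq
  refine ⟨(i, j), mem_filter.2 ⟨mem_product.2 ⟨mem_range.2 hip, mem_range.2 hjq⟩, ?_⟩⟩
  rw [hPi, hQj, ← h0, max_self]
  exact lt_min hPi' (h0 ▸ hQj')

theorem fst_le_of_max_eq (hP : Monotone P) {i j k l : ℕ}
    (hkl : max (P k) (Q l) < min (P (k + 1)) (Q (l + 1)))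
    (heq : max (P i) (Q j) = max (P k) (Q l)) : i ≤ k := by
  by_contra! hki
  refine (lt_irrefl (P (k + 1))) ?_
  calc P (k + 1) ≤ P i := hP hki
    _ ≤ max (P i) (Q j) := le_max_left _ _
    _ = max (P k) (Q l) := heq
    _ < min (P (k + 1)) (Q (l + 1)) := hkl
    _ ≤ P (k + 1) := min_le_left _ _

theorem injOn_max_overlapIndices (hP : Monotone P) (hQ : Monotone Q) :
    Set.InjOn (fun ij : ℕ × ℕ => max (P ij.1) (Q ij.2)) (overlapIndices P Q p q) := by
  rintro ⟨i, j⟩ hij ⟨k, l⟩ hkl (heq : max (P i) (Q j) = max (P k) (Q l))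
  replace hij := (mem_filter.1 hij).2
  replace hkl := (mem_filter.1 hkl).2
  dsimp only at hij hkl
  have heq' : max (Q j) (P i) = max (Q l) (P k) := by rwa [max_comm, max_comm (Q l)]
  have hij' : max (Q j) (P i) < min (Q (j + 1)) (P (i + 1)) := by rwa [max_comm, min_comm]
  have hkl' : max (Q l) (P k) < min (Q (l + 1)) (P (k + 1)) := by rwa [max_comm, min_comm]
  exact Prod.ext (le_antisymm (fst_le_of_max_eq hP hkl heq) (fst_le_of_max_eq hP hij heq.symm))
    (le_antisymm (fst_le_of_max_eq hQ hkl' heq') (fst_le_of_max_eq hQ hij' heq'.symm))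

theorem image_max_overlapIndices_subset :
    (overlapIndices P Q p q).image (fun ij => max (P ij.1) (Q ij.2)) ⊆
      (jumpIndices P p).image P ∪ (jumpIndices Q q).image Q := by
  simp only [subset_iff, mem_image, overlapIndices, jumpIndices, mem_filter, mem_product,
    mem_union]
  rintro _ ⟨⟨i, j⟩, ⟨⟨hi, hj⟩, hij⟩, rfl⟩
  rcases le_total (Q j) (P i) with h | h
  · exact Or.inl ⟨i, ⟨hi, (le_max_left _ _).trans_lt (hij.trans_le (min_le_left _ _))⟩,
      (max_eq_left h).symm⟩
  · exact Or.inr ⟨j, ⟨hj, (le_max_right _ _).trans_lt (hij.trans_le (min_le_right _ _))⟩,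
      (max_eq_right h).symm⟩

theorem card_overlapIndices_add_one_le (hP : Monotone P) (hQ : Monotone Q) (h0 : P 0 = Q 0)
    (hp : P 0 < P p) (hq : Q 0 < Q q) :
    #(overlapIndices P Q p q) + 1 ≤ #(jumpIndices P p) + #(jumpIndices Q q) := by
  have hshared : P 0 ∈ (jumpIndices P p).image P ∩ (jumpIndices Q q).image Q := by
    obtain ⟨i, hip, hPi, hPi'⟩ := hP.exists_first_jump hp
    obtain ⟨j, hjq, hQj, hQj'⟩ := hQ.exists_first_jump hq
    refine mem_inter.2 ⟨mem_image.2 ⟨i, mem_filter.2 ⟨mem_range.2 hip, ?_⟩, hPi⟩,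
      mem_image.2 ⟨j, mem_filter.2 ⟨mem_range.2 hjq, ?_⟩, hQj.trans h0.symm⟩⟩
    · rwa [hPi]
    · rwa [hQj]
  calc #(overlapIndices P Q p q) + 1
      = #((overlapIndices P Q p q).image fun ij => max (P ij.1) (Q ij.2)) + 1 := by
        rw [card_image_of_injOn (injOn_max_overlapIndices hP hQ)]
    _ ≤ #((jumpIndices P p).image P ∪ (jumpIndices Q q).image Q) +
          #((jumpIndices P p).image P ∩ (jumpIndices Q q).image Q) :=
        add_le_add (card_le_card image_max_overlapIndices_subset) (card_pos.2 ⟨_, hshared⟩)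
    _ = #((jumpIndices P p).image P) + #((jumpIndices Q q).image Q) :=
        card_union_add_card_inter _ _
    _ ≤ #(jumpIndices P p) + #(jumpIndices Q q) := add_le_add card_image_le card_image_le

end Staircase

section Topology

variable {X : Type*} [TopologicalSpace X] [PerfectlyNormalSpace X]

theorem IsOpen.exists_continuous_nonneg_pos_iff {U : Set X} (hU : IsOpen U) :
    ∃ g : X → ℝ, Continuous g ∧ ∀ x, 0 ≤ g x ∧ (0 < g x ↔ x ∈ U) := by
  obtain ⟨g, hg, hg01⟩ :=
    perfectlyNormalSpace_iff_forall_isClosed_preimage_zero.1 ‹_› _ hU.isClosed_compl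
  refine ⟨g, g.continuous, fun x => ⟨(hg01 x).1, ?_⟩⟩
  rw [(hg01 x).1.lt_iff_ne', ← not_iff_not, not_not, ← Set.mem_compl_iff, hg,
    Set.mem_preimage, Set.mem_singleton_iff]

theorem exists_staircase {u : ℕ → Set X} (hu : ∀ k, IsOpen (u k)) :
    ∃ P : ℕ → X → ℝ, (∀ i, Continuous (P i)) ∧ (∀ x, Monotone (P · x)) ∧ (∀ x, P 0 x = 0) ∧
      ∀ i x, P i x < P (i + 1) x ↔ x ∈ u i := by
  choose g hg hg0 using fun k => (hu k).exists_continuous_nonneg_pos_iff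
  refine ⟨fun i x => ∑ k ∈ range i, g k x, fun i => continuous_finsetSum _ fun k _ => hg k,
    fun x => monotone_nat_of_le_succ fun i => ?_, fun x => sum_range_zero _, fun i x => ?_⟩
  · simp [sum_range_succ, (hg0 i x).1]
  · simp [sum_range_succ, (hg0 i x).2]

theorem exists_inter_refinement_card_add_one_le {u v : ℕ → Set X} {p q : ℕ}
    (hu : ∀ k, IsOpen (u k)) (hv : ∀ k, IsOpen (v k))
    (hup : ∀ x, ∃ k < p, x ∈ u k) (hvq : ∀ x, ∃ k < q, x ∈ v k) :
    ∃ β : Finset (Set X), IsFinOpenCover β ∧ (∀ W ∈ β, ∃ i < p, ∃ j < q, W ⊆ u i ∩ v j) ∧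
      ∀ x, #{W ∈ β | x ∈ W} + 1 ≤ #{k ∈ range p | x ∈ u k} + #{k ∈ range q | x ∈ v k} := by
  obtain ⟨P, hPc, hPm, hP0, hPu⟩ := exists_staircase hu
  obtain ⟨Q, hQc, hQm, hQ0, hQv⟩ := exists_staircase hv
  set W : ℕ × ℕ → Set X := fun ij =>
    {x | max (P ij.1 x) (Q ij.2 x) < min (P (ij.1 + 1) x) (Q (ij.2 + 1) x)}
  have hW x : {ij ∈ range p ×ˢ range q | x ∈ W ij} = overlapIndices (P · x) (Q · x) p q := rfl
  have hjumps {R : ℕ → X → ℝ} {w : ℕ → Set X} (hRw : ∀ i x, R i x < R (i + 1) x ↔ x ∈ w i)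
      (r : ℕ) (x : X) : jumpIndices (R · x) r = {k ∈ range r | x ∈ w k} :=
    filter_congr fun i _ => hRw i x
  have hpos {R : ℕ → X → ℝ} {w : ℕ → Set X} {r : ℕ} (hRm : ∀ x, Monotone (R · x))
      (hRw : ∀ i x, R i x < R (i + 1) x ↔ x ∈ w i) (hwr : ∀ x, ∃ k < r, x ∈ w k) (x : X) :
      R 0 x < R r x := by
    obtain ⟨k, hk, hxk⟩ := hwr x
    exact (hRm x k.zero_le).trans_lt (((hRw k x).2 hxk).trans_le (hRm x hk))
  refine ⟨(range p ×ˢ range q).image W, ⟨?_, fun x => ?_⟩, ?_, fun x => ?_⟩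
  · simp only [mem_image]
    rintro _ ⟨ij, -, rfl⟩
    exact isOpen_lt ((hPc _).max (hQc _)) ((hPc _).min (hQc _))
  · obtain ⟨ij, hij⟩ := overlapIndices_nonempty (hPm x) (hQm x) ((hP0 x).trans (hQ0 x).symm)
      (hpos hPm hPu hup x) (hpos hQm hQv hvq x)
    rw [← hW, mem_filter] at hij
    exact ⟨W ij, mem_image_of_mem W hij.1, hij.2⟩
  · simp only [mem_image, mem_product, mem_range]
    rintro _ ⟨⟨i, j⟩, ⟨hi, hj⟩, rfl⟩
    refine ⟨i, hi, j, hj, fun x hx => ⟨(hPu i x).1 ?_, (hQv j x).1 ?_⟩⟩ <;>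
      change max (P i x) (Q j x) < min (P (i + 1) x) (Q (j + 1) x) at hx
    · exact (le_max_left _ _).trans_lt (hx.trans_le (min_le_left _ _))
    · exact (le_max_right _ _).trans_lt (hx.trans_le (min_le_right _ _))
  · calc #{V ∈ (range p ×ˢ range q).image W | x ∈ V} + 1
        ≤ #(overlapIndices (P · x) (Q · x) p q) + 1 := by
          rw [filter_image, ← hW]
          exact Nat.add_le_add_right card_image_le 1
      _ ≤ _ := by
          rw [← hjumps hPu, ← hjumps hQv]
          exact card_overlapIndices_add_one_le (hPm x) (hQm x) ((hP0 x).trans (hQ0 x).symm)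
            (hpos hPm hPu hup x) (hpos hQm hQv hvq x)

end Topology

theorem Finset.exists_injOn_image_range_eq {α : Type*} (s : Finset α) (d : α) :
    ∃ u : ℕ → α, Set.InjOn u (range #s) ∧ (range #s).image u = s ∧ ∀ k, #s ≤ k → u k = d := by
  refine ⟨fun k => if h : k < #s then s.equivFin.symm ⟨k, h⟩ else d, ?_, ?_, fun k hk => ?_⟩
  · intro k hk l hl hkl
    simp only [coe_range, Set.mem_Iio] at hk hl
    simpa [hk, hl, Subtype.val_inj] using hkl
  · ext a
    simp only [mem_image, mem_range]
    refine ⟨?_, fun ha => ⟨s.equivFin ⟨a, ha⟩, Fin.is_lt _, by simp⟩⟩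
    rintro ⟨k, hk, rfl⟩
    simp [hk]
  · simp [hk.not_gt]

section Covers

variable {X : Type*} [TopologicalSpace X]

theorem coverOrd_le_iff {γ : Finset (Set X)} {n : ℕ} :
    coverOrd γ ≤ n ↔ ∀ x, #{U ∈ γ | x ∈ U} ≤ n + 1 := by
  have hbdd : BddAbove {c | ∃ x : X, #{U ∈ γ | x ∈ U} = c} := by
    refine ⟨#γ, ?_⟩
    rintro _ ⟨x, rfl⟩
    exact card_filter_le _ _
  rw [coverOrd, Nat.sub_le_iff_le_add]
  refine ⟨fun h x => (le_csSup hbdd ⟨x, rfl⟩).trans h, fun h => csSup_le' ?_⟩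
  rintro _ ⟨x, rfl⟩
  exact h x

theorem IsFinOpenCover.exists_nat_enum {γ : Finset (Set X)} (hγ : IsFinOpenCover γ) :
    ∃ u : ℕ → Set X, (∀ k, IsOpen (u k)) ∧ (∀ x, ∃ k < #γ, x ∈ u k) ∧ (∀ k < #γ, u k ∈ γ) ∧
      ∀ x, #{k ∈ range #γ | x ∈ u k} = #{U ∈ γ | x ∈ U} := by
  obtain ⟨u, hinj, himage, hdefault⟩ := γ.exists_injOn_image_range_eq ∅
  have hmem k (hk : k < #γ) : u k ∈ γ := himage ▸ mem_image_of_mem u (mem_range.2 hk)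
  refine ⟨u, fun k => ?_, fun x => ?_, hmem, fun x => ?_⟩
  · rcases lt_or_ge k #γ with hk | hk
    · exact hγ.1 _ (hmem k hk)
    · exact hdefault k hk ▸ isOpen_empty
  · obtain ⟨U, hU, hxU⟩ := hγ.2 x
    rw [← himage, mem_image] at hU
    obtain ⟨k, hk, rfl⟩ := hU
    exact ⟨k, mem_range.1 hk, hxU⟩
  · conv_rhs => rw [← himage, filter_image]
    exact (card_image_of_injOn (hinj.mono (coe_subset.2 (filter_subset _ _)))).symm

variable [PerfectlyNormalSpace X]

theorem exists_refines_refines_coverOrd_le {γ δ : Finset (Set X)} (hγ : IsFinOpenCover γ)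
    (hδ : IsFinOpenCover δ) :
    ∃ β, IsFinOpenCover β ∧ Refines β γ ∧ Refines β δ ∧ coverOrd β ≤ coverOrd γ + coverOrd δ := by
  obtain ⟨u, hu, hucov, humem, hucard⟩ := hγ.exists_nat_enum
  obtain ⟨v, hv, hvcov, hvmem, hvcard⟩ := hδ.exists_nat_enum
  obtain ⟨β, hβ, hβuv, hβcard⟩ := exists_inter_refinement_card_add_one_le hu hv hucov hvcov
  refine ⟨β, hβ, fun W hW => ?_, fun W hW => ?_, coverOrd_le_iff.2 fun x => ?_⟩
  · obtain ⟨i, hi, j, -, hW⟩ := hβuv W hW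
    exact ⟨u i, humem i hi, hW.trans Set.inter_subset_left⟩
  · obtain ⟨i, -, j, hj, hW⟩ := hβuv W hW
    exact ⟨v j, hvmem j hj, hW.trans Set.inter_subset_right⟩
  · have hγx := coverOrd_le_iff.1 (le_refl (coverOrd γ)) x
    have hδx := coverOrd_le_iff.1 (le_refl (coverOrd δ)) x
    have := hβcard x
    rw [hucard, hvcard] at this
    omega

end Covers

theorem Refines.trans {X : Type*} {α β γ : Finset (Set X)} (hβγ : Refines β γ)
    (hγα : Refines γ α) : Refines β α := fun W hW =>
  let ⟨V, hV, hWV⟩ := hβγ W hW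
  let ⟨U, hU, hVU⟩ := hγα V hV
  ⟨U, hU, hWV.trans hVU⟩

theorem Refines.image₂_inter {X : Type*} {A B β : Finset (Set X)} (hA : Refines β A)
    (hB : Refines β B) : Refines β (image₂ (· ∩ ·) A B) := fun W hW =>
  let ⟨U, hU, hWU⟩ := hA W hW
  let ⟨V, hV, hWV⟩ := hB W hW
  ⟨U ∩ V, mem_image₂_of_mem hU hV, Set.subset_inter hWU hWV⟩

theorem exists_refines_coverOrd_eq_coverD {X : Type*} [TopologicalSpace X] {α : Finset (Set X)}
    (hα : IsFinOpenCover α) : ∃ β, IsFinOpenCover β ∧ Refines β α ∧ coverOrd β = coverD α :=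
  Nat.sInf_mem (s := {c | ∃ β, IsFinOpenCover β ∧ Refines β α ∧ coverOrd β = c})
    ⟨_, α, hα, fun U hU => ⟨U, hU, subset_rfl⟩, rfl⟩

theorem coverD_le_coverOrd {X : Type*} [TopologicalSpace X] {α β : Finset (Set X)}
    (hβ : IsFinOpenCover β) (hβα : Refines β α) : coverD α ≤ coverOrd β :=
  Nat.sInf_le ⟨β, hβ, hβα, rfl⟩

theorem coverD_join_le_general {Y : Type*} [TopologicalSpace Y]
    [TopologicalSpace.MetrizableSpace Y]
    (A B : Finset (Set Y)) (hA : IsFinOpenCover A) (hB : IsFinOpenCover B) :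
    coverD (Finset.image₂ (· ∩ ·) A B) ≤ coverD A + coverD B := by
  obtain ⟨γ, hγ, hγA, hγD⟩ := exists_refines_coverOrd_eq_coverD hA
  obtain ⟨δ, hδ, hδB, hδD⟩ := exists_refines_coverOrd_eq_coverD hB
  obtain ⟨β, hβ, hβγ, hβδ, hβord⟩ := exists_refines_refines_coverOrd_le hγ hδ
  calc coverD (Finset.image₂ (· ∩ ·) A B)
      ≤ coverOrd β := coverD_le_coverOrd hβ ((hβγ.trans hγA).image₂_inter (hβδ.trans hδB))
    _ ≤ coverD A + coverD B := hγD ▸ hδD ▸ hβord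

/-- Subadditivity of `D` under joins: `D(A ∨ B) ≤ D(A) + D(B)`. -/
theorem coverD_join_le {Y : Type*} [TopologicalSpace Y] [CompactSpace Y]
    [TopologicalSpace.MetrizableSpace Y]
    (A B : Finset (Set Y)) (hA : IsFinOpenCover A) (hB : IsFinOpenCover B) :
    coverD (Finset.image₂ (· ∩ ·) A B) ≤ coverD A + coverD B :=
  coverD_join_le_general A B hA hB
end

section
/- Let (X,T) be a dynamical system on a compact metric space with positive topological entropy having independence set I with lower density d(I) > 0 for an IE-pair (U_0, U_1). Then, with q_m = ⌊m d(I)/2⌋, γ_m chosen so that d(x,y) < γ_m implies d(T^kx,T^ky) < d(U_0,U_1) for 0 ≤ k < m, and I^m_n = I^m ∩ [1,n], there exists for each n a set of at least 2^{2^{q_m} · #I^m_n} probability measures in M(X) that is (n, γ_m/2^{q_m})-separated for the dynamical 1-Wasserstein metric W^m_n(μ,ν) = max_{0≤k<n} W₁(T_*^{km}μ, T_*^{km}ν). Consequently s_n(W, T_*^m, M(X), γ_m/2^{q_m}) ≥ 2^{2^{q_m}·#I^m_n}. -/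
open MeasureTheory Filter

/-- Infimum distance between two sets. -/
noncomputable def setDist {X : Type*} [MetricSpace X] (A B : Set X) : ℝ :=
  sInf (Set.image2 dist A B)

/-- The 1-Wasserstein distance (Kantorovich–Rubinstein dual form). -/
noncomputable def wasserstein {X : Type*} [MetricSpace X] [MeasurableSpace X]
    (μ ν : ProbabilityMeasure X) : ℝ :=
  sSup {r : ℝ | ∃ f : X → ℝ, LipschitzWith 1 f ∧
    r = ∫ x, f x ∂(μ : Measure X) - ∫ x, f x ∂(ν : Measure X)}

private theorem symm_congr' {q : ℕ} {s t : Finset ℕ} (h : s = t) (hs : s.card = q+1)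
    (ht : t.card = q+1) (j : ℕ) (hj : j ∈ s) (hj' : j ∈ t) :
    ((s.orderIsoOfFin hs).symm ⟨j, hj⟩ : Fin (q+1)) = (t.orderIsoOfFin ht).symm ⟨j, hj'⟩ := by
  subst h; rfl

/-- Many separated measures from an independence set: with `q_m = ⌊m d(I)/2⌋` and
`I^m_n` the good blocks up to `n`, there is a `(n, γ_m/2^{q_m})`-separated family of
`2^{2^{q_m}·#I^m_n}` probability measures for the dynamical Wasserstein metric of `T_*^m`. -/
theorem separated_measures_of_independence {X : Type*} [MetricSpace X] [CompactSpace X]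
    [MeasurableSpace X] [BorelSpace X]
    (T : X → X) (hT : Continuous T) (U : Bool → Set X)
    (hopen : ∀ b, IsOpen (U b)) (hne : ∀ b, (U b).Nonempty)
    (hdisj : Disjoint (closure (U false)) (closure (U true)))
    (I : Set ℕ)
    (hindep : ∀ J : Finset ℕ, ↑J ⊆ I → ∀ ζ : ℕ → Bool,
      ∃ x : X, ∀ j ∈ J, T^[j] x ∈ U (ζ j))
    (hd : 0 < lowerDensity I)
    (m : ℕ) (hm : 1 ≤ m) (γ : ℝ) (hγ : 0 < γ)
    (hγm : ∀ x y : X, dist x y < γ → ∀ k < m,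
      dist (T^[k] x) (T^[k] y) < setDist (U false) (U true))
    (n : ℕ) :
    ∃ E : Finset (ProbabilityMeasure X),
      2 ^ (2 ^ (⌊(m : ℝ) * lowerDensity I / 2⌋₊)
          * Nat.card ↥({k : ℕ | (⌊(m : ℝ) * lowerDensity I / 2⌋₊ : ℕ)
              < Nat.card ↥(I ∩ Set.Ico (k * m) ((k + 1) * m))} ∩ Set.Icc 1 n))
        ≤ E.card ∧
      ∀ μ ∈ E, ∀ ν ∈ E, μ ≠ ν → ∃ k < n,
        γ / 2 ^ (⌊(m : ℝ) * lowerDensity I / 2⌋₊)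
          ≤ wasserstein
              (μ.map (f := T^[k * m]) (hT.iterate (k * m)).measurable.aemeasurable)
              (ν.map (f := T^[k * m]) (hT.iterate (k * m)).measurable.aemeasurable) := by
  classical
  set q : ℕ := ⌊(m : ℝ) * lowerDensity I / 2⌋₊ with hq
  set S : Finset ℕ := (Finset.Icc 1 n).filter
      (fun k => q < Nat.card ↥(I ∩ Set.Ico (k * m) ((k + 1) * m))) with hSdef
  -- cardinality of the index set
  have hScard : Nat.card ↥({k : ℕ | q < Nat.card ↥(I ∩ Set.Ico (k * m) ((k + 1) * m))}
      ∩ Set.Icc 1 n) = S.card := by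
    have h : ({k : ℕ | q < Nat.card ↥(I ∩ Set.Ico (k * m) ((k + 1) * m))} ∩ Set.Icc 1 n)
        = ↑S := by
      ext k
      simp [hSdef, and_comm]
    rw [h, Nat.card_coe_set_eq, Set.ncard_coe_finset]
  -- choose blocks of independence times
  have hJex : ∀ k, ∃ t : Finset ℕ, t.card = q + 1 ∧
      (k ∈ S → ↑t ⊆ I ∩ Set.Ico (k * m) ((k + 1) * m)) := by
    intro k
    by_cases hk : k ∈ S
    · have hk' : q < Nat.card ↥(I ∩ Set.Ico (k * m) ((k + 1) * m)) := by
        have := hk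
        rw [hSdef, Finset.mem_filter] at this
        exact this.2
      have hfin : (I ∩ Set.Ico (k * m) ((k + 1) * m)).Finite :=
        (Set.finite_Ico _ _).inter_of_right _
      have hcard : q + 1 ≤ hfin.toFinset.card := by
        rw [Nat.card_coe_set_eq, Set.ncard_eq_toFinset_card _ hfin] at hk'
        omega
      obtain ⟨t, hts, htc⟩ := Finset.exists_subset_card_eq hcard
      exact ⟨t, htc, fun _ j hj => hfin.mem_toFinset.mp (hts hj)⟩
    · exact ⟨Finset.range (q + 1), Finset.card_range _, fun h => absurd h hk⟩
  choose Jk hJkcard hJksub using hJex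
  -- block positions
  have hbounds : ∀ k ∈ S, ∀ j ∈ Jk k, j ∈ I ∧ k * m ≤ j ∧ j < (k + 1) * m := by
    intro k hk j hj
    have := hJksub k hk hj
    exact ⟨this.1, this.2.1, this.2.2⟩
  have hdiv : ∀ k ∈ S, ∀ j ∈ Jk k, j / m = k := by
    intro k hk j hj
    obtain ⟨_, h1, h2⟩ := hbounds k hk j hj
    exact Nat.div_eq_of_lt_le h1 h2
  -- the independence union and patterns
  have hJI : ↑(S.biUnion Jk) ⊆ I := by
    intro j hj
    rw [Finset.coe_biUnion] at hj
    simp only [Set.mem_iUnion] at hj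
    obtain ⟨k, hk, hjk⟩ := hj
    exact (hbounds k hk j hjk).1
  -- pattern functions
  set Z : (ℕ → (Fin q → Bool) → Bool) → (Fin q → Bool) → ℕ → Bool :=
    fun σ p j => if h : j ∈ Jk (j / m) then
        (if hi : ((((Jk (j / m)).orderIsoOfFin (hJkcard _)).symm ⟨j, h⟩ : Fin (q+1)) : ℕ) < q
         then p ⟨_, hi⟩ else σ (j / m) p)
      else false with hZdef
  have hZeval : ∀ (σ : ℕ → (Fin q → Bool) → Bool) (p : Fin q → Bool) (k : ℕ), k ∈ S →
      ∀ i : Fin (q+1), Z σ p (((Jk k).orderIsoOfFin (hJkcard k) i : ℕ))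
        = if hi : (i : ℕ) < q then p ⟨i, hi⟩ else σ k p := by
    intro σ p k hk i
    have hjmem : (((Jk k).orderIsoOfFin (hJkcard k) i : ℕ)) ∈ Jk k :=
      ((Jk k).orderIsoOfFin (hJkcard k) i).2
    have hd' : ((Jk k).orderIsoOfFin (hJkcard k) i : ℕ) / m = k := hdiv k hk _ hjmem
    have hmem' : (((Jk k).orderIsoOfFin (hJkcard k) i : ℕ))
        ∈ Jk ((((Jk k).orderIsoOfFin (hJkcard k) i : ℕ)) / m) := by rw [hd']; exact hjmem
    rw [hZdef]
    simp only []
    rw [dif_pos hmem']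
    have hcongr := symm_congr' (congrArg Jk hd') (hJkcard _) (hJkcard k) _ hmem' hjmem
    have he : (⟨((Jk k).orderIsoOfFin (hJkcard k) i : ℕ), hjmem⟩ : {x // x ∈ Jk k})
        = (Jk k).orderIsoOfFin (hJkcard k) i := Subtype.coe_eta _ _
    rw [he, OrderIso.symm_apply_apply] at hcongr
    simp only [hcongr, hd']
  -- independence points
  have hxex : ∀ ζ : ℕ → Bool, ∃ x : X, ∀ j ∈ S.biUnion Jk, T^[j] x ∈ U (ζ j) :=
    fun ζ => hindep _ hJI ζ
  choose x hx using hxex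
  -- extension of index functions
  set ext : (↥S → (Fin q → Bool) → Bool) → ℕ → (Fin q → Bool) → Bool :=
    fun σ k p => if hk : k ∈ S then σ ⟨k, hk⟩ p else false with hextdef
  -- the measures
  have hPM : ∀ σ : ↥S → (Fin q → Bool) → Bool,
      ((2 ^ q : ENNReal)⁻¹
        • ∑ p : Fin q → Bool, Measure.dirac (T^[m] (x (Z (ext σ) p)))) Set.univ = 1 := by
    intro σ
    have h2 : ((2 : ENNReal) ^ q) ≠ 0 := by positivity
    simp [Measure.finset_sum_apply, ENNReal.inv_mul_cancel h2, Fintype.card_fun]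
  set F : (↥S → (Fin q → Bool) → Bool) → ProbabilityMeasure X :=
    fun σ => ⟨(2 ^ q : ENNReal)⁻¹
      • ∑ p : Fin q → Bool, Measure.dirac (T^[m] (x (Z (ext σ) p))), ⟨hPM σ⟩⟩ with hFdef
  -- integrals against the measures
  have hInt : ∀ (σ : ↥S → (Fin q → Bool) → Bool) (g : X → ℝ), Continuous g →
      ∫ z, g z ∂((F σ : Measure X))
        = (2 ^ q : ℝ)⁻¹ * ∑ p : Fin q → Bool, g (T^[m] (x (Z (ext σ) p))) := by
    intro σ g hg
    have hItg : ∀ (μ : Measure X) [IsFiniteMeasure μ], Integrable g μ := fun μ _ =>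
      hg.integrable_of_hasCompactSupport ((isClosed_tsupport g).isCompact)
    show ∫ z, g z ∂((2 ^ q : ENNReal)⁻¹
        • ∑ p : Fin q → Bool, Measure.dirac (T^[m] (x (Z (ext σ) p)))) = _
    rw [integral_smul_measure, integral_finset_sum_measure (fun _ _ => hItg _)]
    simp [integral_dirac, smul_eq_mul]
  have hIntMap : ∀ (σ : ↥S → (Fin q → Bool) → Bool) (k : ℕ) (g : X → ℝ), Continuous g →
      ∫ z, g z ∂((F σ).map (f := T^[k]) (hT.iterate k).measurable.aemeasurable : Measure X)
        = (2 ^ q : ℝ)⁻¹ * ∑ p : Fin q → Bool, g (T^[k] (T^[m] (x (Z (ext σ) p)))) := by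
    intro σ k g hg
    rw [ProbabilityMeasure.toMeasure_map,
      integral_map ((hT.iterate k).measurable.aemeasurable) hg.aestronglyMeasurable]
    exact hInt σ (fun z => g (T^[k] z)) (hg.comp (hT.iterate k))
  -- Wasserstein facts
  obtain ⟨x₀, _⟩ := hne false
  have hBdd : ∀ ρ₁ ρ₂ : ProbabilityMeasure X, BddAbove {r : ℝ | ∃ f : X → ℝ,
      LipschitzWith 1 f ∧ r = ∫ z, f z ∂(ρ₁ : Measure X) - ∫ z, f z ∂(ρ₂ : Measure X)} := by
    intro ρ₁ ρ₂
    refine ⟨2 * Metric.diam (Set.univ : Set X), ?_⟩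
    rintro r ⟨f, hf, rfl⟩
    have hint : ∀ ρ : ProbabilityMeasure X, Integrable f (ρ : Measure X) := fun ρ => by
      exact Continuous.integrable_of_hasCompactSupport (μ := (ρ : Measure X))
        hf.continuous ((isClosed_tsupport f).isCompact)
    have key : ∀ ρ : ProbabilityMeasure X,
        |∫ z, f z ∂(ρ : Measure X) - f x₀| ≤ Metric.diam (Set.univ : Set X) := by
      intro ρ
      have h1 : ∫ z, f z ∂(ρ : Measure X) - f x₀ = ∫ z, (f z - f x₀) ∂(ρ : Measure X) := by
        rw [integral_sub (hint ρ) (integrable_const _)]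
        simp
      rw [h1]
      have := norm_integral_le_of_norm_le_const (μ := (ρ : Measure X))
        (f := fun z => f z - f x₀) (C := Metric.diam (Set.univ : Set X)) ?_
      · simpa using this
      · filter_upwards with z
        have h2 : dist (f z) (f x₀) ≤ 1 * dist z x₀ := hf.dist_le_mul z x₀
        rw [one_mul] at h2
        calc ‖f z - f x₀‖ = dist (f z) (f x₀) := by rw [Real.dist_eq]; rfl
          _ ≤ dist z x₀ := h2
          _ ≤ Metric.diam (Set.univ : Set X) :=
              Metric.dist_le_diam_of_mem isCompact_univ.isBounded trivial trivial
    have k1 := key ρ₁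
    have k2 := key ρ₂
    rw [abs_le] at k1 k2
    linarith [k1.2, k2.1]
  have hwsge : ∀ ρ₁ ρ₂ : ProbabilityMeasure X, ∀ f : X → ℝ, LipschitzWith 1 f →
      ∫ z, f z ∂(ρ₁ : Measure X) - ∫ z, f z ∂(ρ₂ : Measure X) ≤ wasserstein ρ₁ ρ₂ :=
    fun ρ₁ ρ₂ f hf => le_csSup (hBdd ρ₁ ρ₂) ⟨f, hf, rfl⟩
  have hself : ∀ ρ : ProbabilityMeasure X, wasserstein ρ ρ = 0 := by
    intro ρ
    have h : {r : ℝ | ∃ f : X → ℝ, LipschitzWith 1 f ∧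
        r = ∫ z, f z ∂(ρ : Measure X) - ∫ z, f z ∂(ρ : Measure X)} = {0} := by
      ext r
      simp only [Set.mem_setOf_eq, Set.mem_singleton_iff]
      constructor
      · rintro ⟨f, hf, rfl⟩; ring
      · rintro rfl
        exact ⟨fun _ => 0, (LipschitzWith.const 0).weaken zero_le_one, by ring⟩
    rw [wasserstein, h, csSup_singleton]
  have hγq : (0 : ℝ) < γ / 2 ^ q := div_pos hγ (by positivity)
  -- the key separation claim
  have key : ∀ σ τ : ↥S → (Fin q → Bool) → Bool, σ ≠ τ → ∃ k < n,
      γ / 2 ^ q ≤ wasserstein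
        ((F σ).map (f := T^[k * m]) (hT.iterate (k * m)).measurable.aemeasurable)
        ((F τ).map (f := T^[k * m]) (hT.iterate (k * m)).measurable.aemeasurable) := by
    intro σ τ hστ
    obtain ⟨kk, hk1⟩ := Function.ne_iff.mp hστ
    obtain ⟨pp, hpp⟩ := Function.ne_iff.mp hk1
    obtain ⟨k₀, hk₀S⟩ := kk
    have hk₀Icc : 1 ≤ k₀ ∧ k₀ ≤ n := by
      have := hk₀S
      rw [hSdef, Finset.mem_filter, Finset.mem_Icc] at this
      exact this.1
    refine ⟨k₀ - 1, by omega, ?_⟩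
    have hkm : (k₀ - 1) * m + m = k₀ * m := by
      have h1 : k₀ - 1 + 1 = k₀ := by omega
      calc (k₀ - 1) * m + m = (k₀ - 1 + 1) * m := by ring
        _ = k₀ * m := by rw [h1]
    -- the target point and separation of points
    set a : X := T^[k₀ * m] (x (Z (ext σ) pp)) with ha
    have hdist : ∀ p : Fin q → Bool, γ ≤ dist (T^[k₀ * m] (x (Z (ext τ) p))) a := by
      intro p
      by_contra hlt
      push_neg at hlt
      -- find a time where the patterns disagree
      obtain ⟨j, hjJ, hbne⟩ : ∃ j ∈ Jk k₀, Z (ext τ) p j ≠ Z (ext σ) pp j := by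
        by_cases hp : p = pp
        · refine ⟨((Jk k₀).orderIsoOfFin (hJkcard k₀) ⟨q, lt_add_one q⟩ : ℕ),
            ((Jk k₀).orderIsoOfFin (hJkcard k₀) ⟨q, lt_add_one q⟩).2, ?_⟩
          rw [hZeval _ _ _ hk₀S, hZeval _ _ _ hk₀S]
          rw [dif_neg (by simp), dif_neg (by simp)]
          rw [hextdef]
          simp only [dif_pos hk₀S]
          rw [hp]
          exact fun h => hpp (h.symm)
        · obtain ⟨i, hi⟩ := Function.ne_iff.mp hp
          refine ⟨((Jk k₀).orderIsoOfFin (hJkcard k₀) (i.castSucc) : ℕ),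
            ((Jk k₀).orderIsoOfFin (hJkcard k₀) (i.castSucc)).2, ?_⟩
          rw [hZeval _ _ _ hk₀S, hZeval _ _ _ hk₀S]
          have hcast : ((i.castSucc : Fin (q+1)) : ℕ) < q := i.2
          rw [dif_pos hcast, dif_pos hcast]
          simpa using hi
      obtain ⟨hjI, hj1, hj2⟩ := hbounds k₀ hk₀S j hjJ
      have hjJ' : j ∈ S.biUnion Jk := Finset.mem_biUnion.mpr ⟨k₀, hk₀S, hjJ⟩
      have h1 := hx (Z (ext τ) p) j hjJ'
      have h2 := hx (Z (ext σ) pp) j hjJ'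
      -- different U's at time j gives distance ≥ setDist
      have hBddBelow : BddBelow (Set.image2 dist (U false) (U true)) := by
        refine ⟨0, ?_⟩
        rintro r ⟨u, hu, v, hv, rfl⟩
        exact dist_nonneg
      have hsep : setDist (U false) (U true)
          ≤ dist (T^[j] (x (Z (ext τ) p))) (T^[j] (x (Z (ext σ) pp))) := by
        rcases Bool.eq_false_or_eq_true (Z (ext τ) p j) with hb1 | hb1 <;>
          rcases Bool.eq_false_or_eq_true (Z (ext σ) pp j) with hb2 | hb2
        · rw [hb1, hb2] at hbne; exact absurd rfl hbne
        · rw [hb1] at h1; rw [hb2] at h2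
          rw [dist_comm]
          exact csInf_le hBddBelow (Set.mem_image2_of_mem h2 h1)
        · rw [hb1] at h1; rw [hb2] at h2
          exact csInf_le hBddBelow (Set.mem_image2_of_mem h1 h2)
        · rw [hb1, hb2] at hbne; exact absurd rfl hbne
      -- contradiction with hγm
      have hl : j - k₀ * m < m := by
        have : (k₀ + 1) * m = k₀ * m + m := by ring
        omega
      have hcon := hγm _ _ hlt (j - k₀ * m) hl
      rw [← Function.iterate_add_apply, ← Function.iterate_add_apply] at hcon
      rw [Nat.sub_add_cancel hj1] at hcon
      exact absurd hsep (not_le.mpr hcon)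
    -- the test function
    set ftest : X → ℝ := fun z => max (γ - dist z a) 0 with hft
    have hlip : LipschitzWith 1 ftest := by
      apply LipschitzWith.of_dist_le_mul
      intro u v
      rw [NNReal.coe_one, one_mul, Real.dist_eq]
      calc |max (γ - dist u a) 0 - max (γ - dist v a) 0|
          ≤ |(γ - dist u a) - (γ - dist v a)| := abs_max_sub_max_le_abs _ _ _
        _ = |dist u a - dist v a| := by rw [← abs_neg]; ring_nf
        _ ≤ dist u v := abs_dist_sub_le _ _ _
    -- integrals
    have hι1 : ∫ z, ftest z ∂((F σ).map (f := T^[(k₀ - 1) * m])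
        (hT.iterate ((k₀ - 1) * m)).measurable.aemeasurable : Measure X)
        = (2 ^ q : ℝ)⁻¹ * ∑ p : Fin q → Bool, ftest (T^[k₀ * m] (x (Z (ext σ) p))) := by
      rw [hIntMap σ _ _ hlip.continuous]
      congr 1
      apply Finset.sum_congr rfl
      intro p _
      rw [← Function.iterate_add_apply, hkm]
    have hι2 : ∫ z, ftest z ∂((F τ).map (f := T^[(k₀ - 1) * m])
        (hT.iterate ((k₀ - 1) * m)).measurable.aemeasurable : Measure X)
        = (2 ^ q : ℝ)⁻¹ * ∑ p : Fin q → Bool, ftest (T^[k₀ * m] (x (Z (ext τ) p))) := by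
      rw [hIntMap τ _ _ hlip.continuous]
      congr 1
      apply Finset.sum_congr rfl
      intro p _
      rw [← Function.iterate_add_apply, hkm]
    -- first integral is large
    have hbig : γ / 2 ^ q ≤ ∫ z, ftest z ∂((F σ).map (f := T^[(k₀ - 1) * m])
        (hT.iterate ((k₀ - 1) * m)).measurable.aemeasurable : Measure X) := by
      rw [hι1]
      have hterm : ftest (T^[k₀ * m] (x (Z (ext σ) pp))) = γ := by
        rw [hft]
        simp only [← ha, dist_self, sub_zero]
        exact max_eq_left hγ.le
      have hnonneg : ∀ p : Fin q → Bool, 0 ≤ ftest (T^[k₀ * m] (x (Z (ext σ) p))) :=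
        fun p => le_max_right _ _
      have hsum : γ ≤ ∑ p : Fin q → Bool, ftest (T^[k₀ * m] (x (Z (ext σ) p))) := by
        rw [← hterm]
        exact Finset.single_le_sum (fun p _ => hnonneg p) (Finset.mem_univ pp)
      rw [div_eq_inv_mul]
      have h2q : (0:ℝ) < (2 ^ q : ℝ)⁻¹ := by positivity
      exact mul_le_mul_of_nonneg_left hsum h2q.le
    -- second integral vanishes
    have hzero : ∫ z, ftest z ∂((F τ).map (f := T^[(k₀ - 1) * m])
        (hT.iterate ((k₀ - 1) * m)).measurable.aemeasurable : Measure X) = 0 := by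
      rw [hι2]
      have : ∀ p : Fin q → Bool, ftest (T^[k₀ * m] (x (Z (ext τ) p))) = 0 := by
        intro p
        rw [hft]
        simp only []
        exact max_eq_right (by linarith [hdist p])
      rw [Finset.sum_congr rfl (fun p _ => this p)]
      simp
    calc γ / 2 ^ q
        ≤ ∫ z, ftest z ∂((F σ).map (f := T^[(k₀ - 1) * m])
            (hT.iterate ((k₀ - 1) * m)).measurable.aemeasurable : Measure X)
          - ∫ z, ftest z ∂((F τ).map (f := T^[(k₀ - 1) * m])
            (hT.iterate ((k₀ - 1) * m)).measurable.aemeasurable : Measure X) := by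
          rw [hzero]; linarith
      _ ≤ _ := hwsge _ _ ftest hlip
  -- injectivity
  have hFinj : Function.Injective F := by
    intro σ τ hFeq
    by_contra hστ
    obtain ⟨k, hk, hle⟩ := key σ τ hστ
    rw [hFeq] at hle
    rw [hself] at hle
    exact absurd hle (not_le.mpr hγq)
  refine ⟨Finset.univ.image F, ?_, ?_⟩
  · rw [Finset.card_image_of_injective _ hFinj, Finset.card_univ, hScard]
    have hcard : Fintype.card (↥S → (Fin q → Bool) → Bool) = 2 ^ (2 ^ q * S.card) := by
      rw [Fintype.card_fun, Fintype.card_fun, Fintype.card_fun]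
      simp [Fintype.card_coe, ← pow_mul]
    rw [hcard]
  · intro μ hμ ν hν hμν
    obtain ⟨σ, _, rfl⟩ := Finset.mem_image.mp hμ
    obtain ⟨τ, _, rfl⟩ := Finset.mem_image.mp hν
    exact key σ τ (fun h => hμν (by rw [h]))
end

section
/- Let X be a compact metric space, K ⊆ M(X) the convex hull of Dirac measures δ_{x_𝐢} at finitely many distinct points x_𝐢 indexed by 𝐢 ∈ {1,…,k}^J for a finite index set J, and Ξ: Δ_k^J → K ⊆ M(X) the composition of the multi-affine embedding Θ with the affine parametrization t ↦ Σ_𝐢 t_𝐢 δ_{x_𝐢}. Then for any face F of Δ_k, any i ∈ J, and any μ = Ξ(t) ∈ Ξ(Δ_k^J), there exist λ ∈ [0,1], μ' ∈ Ξ(F_i), μ'' ∈ Ξ(F̄_i) with μ = λ μ' + (1−λ) μ'', λ = μ(S_{Ξ(F_i)}) and 1−λ = μ(S_{Ξ(F̄_i)}), where S_E = ∪_{ν∈E} supp(ν). -/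
open MeasureTheory
open scoped Classical

/-- The (closed) support of a measure: points all of whose neighborhoods have
positive measure. -/
def mSupport {X : Type*} [TopologicalSpace X] [MeasurableSpace X] (μ : Measure X) :
    Set X := {p | ∀ U : Set X, IsOpen U → p ∈ U → 0 < μ U}

/-- The face of the simplex `Δ_k` with index set `I`. -/
def simplexFace (k : ℕ) (I : Finset (Fin k)) : Set (Fin k → ℝ) :=
  {t ∈ stdSimplex ℝ (Fin k) | ∀ j ∉ I, t j = 0}

variable {X : Type*} [MetricSpace X] [CompactSpace X] [MeasurableSpace X] [BorelSpace X]
variable {J : Type*} [Fintype J] [DecidableEq J]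

/-- The multi-affine parametrization `Ξ(t) = Σ_𝐢 (∏_m t_{m,i_m}) δ_{x_𝐢}`. -/
noncomputable def Xi (k : ℕ) (x : (J → Fin k) → X) (t : J → Fin k → ℝ) : Measure X :=
  ∑ ii : J → Fin k, ENNReal.ofReal (∏ m : J, t m (ii m)) • Measure.dirac (x ii)

/-- The cube face `F_i ⊆ Δ_k^J` determined by a face `I` of `Δ_k` at coordinate `i`. -/
def cubeFaceSet (k : ℕ) (I : Finset (Fin k)) (i : J) : Set (J → Fin k → ℝ) :=
  {t | (∀ m : J, t m ∈ stdSimplex ℝ (Fin k)) ∧ t i ∈ simplexFace k I}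

/-- `S_E`: the union of the supports of the measures `Ξ(t)`, `t ∈ s`. -/
def suppUnion (k : ℕ) (x : (J → Fin k) → X) (s : Set (J → Fin k → ℝ)) : Set X :=
  ⋃ t ∈ s, mSupport (Xi k x t)

/-!
`Ξ` is affine in each row `t_i` separately. A row `t_i ∈ Δ_k` splits as `λ u + (1 - λ) v`
with `u ∈ F`, `v ∈ F̄` and `λ = ∑_{j ∈ F} t_{i,j}`; replacing `t_i` by `u`, resp. `v`, gives the
points of `F_i` and `F̄_i`. The union of supports over `F_i` is the set of atoms `x_𝐢` with
`𝐢_i ∈ F` (each one is charged by a vertex of `F_i`), and since the other rows sum to `1`,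
`Ξ(t)` gives this set mass `∑_{j ∈ F} t_{i,j} = λ`.
-/

open scoped ENNReal

section DiracSum

variable {α ι : Type*} [MeasurableSpace α] [MeasurableSingletonClass α] [Fintype ι]

lemma sum_smul_dirac_apply (w : ι → ℝ≥0∞) (y : ι → α) (S : Set α) [DecidablePred (· ∈ S)] :
    (∑ i, w i • Measure.dirac (y i)) S = ∑ i with y i ∈ S, w i := by
  simp [Measure.finsetSum_apply, Measure.dirac_apply, Finset.sum_filter, Set.indicator]

lemma sum_smul_dirac_apply_image {y : ι → α} (hy : Function.Injective y) (w : ι → ℝ≥0∞)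
    (A : Set ι) : (∑ i, w i • Measure.dirac (y i)) (y '' A) = ∑ i with i ∈ A, w i := by
  classical
  simp only [sum_smul_dirac_apply, hy.mem_set_image]

lemma mSupport_sum_smul_dirac [TopologicalSpace α] [T1Space α] (w : ι → ℝ≥0∞) (y : ι → α) :
    mSupport (∑ i, w i • Measure.dirac (y i)) = y '' {i | w i ≠ 0} := by
  ext p
  constructor
  · intro hp
    by_contra hp'
    have hopen : IsOpen (y '' {i | w i ≠ 0})ᶜ :=
      ((Set.toFinite _).image y).isClosed.isOpen_compl
    have hpos := hp _ hopen hp'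
    rw [sum_smul_dirac_apply, Finset.sum_eq_zero] at hpos
    · exact lt_irrefl 0 hpos
    · intro i hi
      by_contra hwi
      exact (Finset.mem_filter.1 hi).2 ⟨i, hwi, rfl⟩
  · rintro ⟨i, hi, rfl⟩ U - hiU
    rw [sum_smul_dirac_apply]
    exact (pos_iff_ne_zero.2 hi).trans_le <|
      Finset.single_le_sum (fun _ _ => zero_le) (Finset.mem_filter.2 ⟨Finset.mem_univ i, hiU⟩)

end DiracSum

section ProductCoefficients

variable {R ι κ : Type*} [CommSemiring R] [Fintype ι] [DecidableEq ι]

lemma sum_filter_prod_eq_sum [Fintype κ] (t : ι → κ → R) (i : ι) (ht : ∀ m ≠ i, ∑ j, t m j = 1)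
    (I : Finset κ) : ∑ f : ι → κ with f i ∈ I, ∏ m, t m (f m) = ∑ j ∈ I, t i j := by
  have hfilter : Finset.univ.filter (fun f : ι → κ => f i ∈ I) =
      Fintype.piFinset (Function.update (fun _ => Finset.univ) i I) := by
    ext f
    simp only [Finset.mem_filter, Finset.mem_univ, true_and, Fintype.mem_piFinset]
    refine ⟨fun hf m => ?_, fun hf => by simpa using hf i⟩
    rcases eq_or_ne m i with rfl | hm
    · simpa using hf
    · simp [hm]
  rw [hfilter, ← Finset.prod_univ_sum, Fintype.prod_eq_single i]
  · simp
  · intro m hm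
    simpa [hm] using ht m hm

lemma prod_update_apply (t : ι → κ → R) (i : ι) (u : κ → R) (f : ι → κ) :
    ∏ m, Function.update t i u m (f m) = u (f i) * ∏ m ∈ Finset.univ \ {i}, t m (f m) := by
  rw [← Finset.prod_update_of_mem (Finset.mem_univ i)]
  exact Finset.prod_congr rfl fun m _ =>
    Function.apply_update (fun m (r : κ → R) => r (f m)) t i u m

lemma prod_update_apply_add_smul (t : ι → κ → R) (i : ι) (a b : R) (u v : κ → R)
    (f : ι → κ) :
    ∏ m, Function.update t i (a • u + b • v) m (f m) =
      a * ∏ m, Function.update t i u m (f m) + b * ∏ m, Function.update t i v m (f m) := by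
  simp only [prod_update_apply, Pi.add_apply, Pi.smul_apply, smul_eq_mul]
  ring

end ProductCoefficients

section SimplexFace

variable {k : ℕ}

lemma exists_mem_simplexFace_eq_mul {s : Fin k → ℝ} (hs : 0 ≤ s) {I : Finset (Fin k)}
    (hI : I.Nonempty) : ∃ u ∈ simplexFace k I, ∀ j ∈ I, s j = (∑ j ∈ I, s j) * u j := by
  rcases (Finset.sum_nonneg fun j _ => hs j : 0 ≤ ∑ j ∈ I, s j).eq_or_lt with hc | hc
  · -- `s` vanishes on `I`, so any vertex of the face will do
    obtain ⟨j₀, hj₀⟩ := hI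
    refine ⟨Pi.single j₀ 1, ⟨single_mem_stdSimplex ℝ j₀, fun j hj => ?_⟩, fun j hj => ?_⟩
    · exact Pi.single_eq_of_ne (ne_of_mem_of_not_mem hj₀ hj).symm 1
    · rw [← hc, zero_mul]
      exact (Finset.sum_eq_zero_iff_of_nonneg fun j _ => hs j).1 hc.symm j hj
  · refine ⟨fun j => if j ∈ I then s j / ∑ j ∈ I, s j else 0,
      ⟨⟨fun j => ?_, ?_⟩, fun j hj => ?_⟩, fun j hj => ?_⟩
    · by_cases hj : j ∈ I <;> simp [hj, div_nonneg (hs j) hc.le]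
    · rw [Finset.sum_ite_mem, Finset.univ_inter, ← Finset.sum_div, div_self hc.ne']
    · simp [hj]
    · simp only [hj, if_true]
      field_simp

lemma exists_simplexFace_decomposition {s : Fin k → ℝ} (hs : s ∈ stdSimplex ℝ (Fin k))
    {I : Finset (Fin k)} (hI : I.Nonempty) (hIc : Iᶜ.Nonempty) :
    ∃ u ∈ simplexFace k I, ∃ v ∈ simplexFace k Iᶜ,
      s = (∑ j ∈ I, s j) • u + (1 - ∑ j ∈ I, s j) • v := by
  obtain ⟨u, hu, hsu⟩ := exists_mem_simplexFace_eq_mul hs.1 hI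
  obtain ⟨v, hv, hsv⟩ := exists_mem_simplexFace_eq_mul hs.1 hIc
  have hcompl : ∑ j ∈ Iᶜ, s j = 1 - ∑ j ∈ I, s j := by
    rw [← hs.2, ← Finset.sum_add_sum_compl I]
    ring
  refine ⟨u, hu, v, hv, funext fun j => ?_⟩
  by_cases hj : j ∈ I
  · simp [hsu j hj, hv.2 j (Finset.notMem_compl.2 hj)]
  · simp [← hcompl, hsv j (Finset.mem_compl.2 hj), hu.2 j hj]

end SimplexFace

section Xi

variable {J : Type*} [DecidableEq J] {k : ℕ}

lemma update_mem_cubeFaceSet {t : J → Fin k → ℝ} (ht : ∀ m, t m ∈ stdSimplex ℝ (Fin k))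
    {I : Finset (Fin k)} {i : J} {u : Fin k → ℝ} (hu : u ∈ simplexFace k I) :
    Function.update t i u ∈ cubeFaceSet k I i := by
  refine ⟨fun m => ?_, by simpa using hu⟩
  rcases eq_or_ne m i with rfl | hm
  · simpa using hu.1
  · simpa [hm] using ht m

variable [Fintype J] {X : Type*} [MeasurableSpace X] {x : (J → Fin k) → X}

lemma Xi_update_add_smul {t : J → Fin k → ℝ} (ht : ∀ m, 0 ≤ t m) (i : J) {u v : Fin k → ℝ}
    (hu : 0 ≤ u) (hv : 0 ≤ v) {a b : ℝ} (ha : 0 ≤ a) (hb : 0 ≤ b) :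
    Xi k x (Function.update t i (a • u + b • v)) =
      ENNReal.ofReal a • Xi k x (Function.update t i u) +
        ENNReal.ofReal b • Xi k x (Function.update t i v) := by
  have hprod : ∀ w : Fin k → ℝ, 0 ≤ w → ∀ ii : J → Fin k,
      0 ≤ ∏ m, Function.update t i w m (ii m) := by
    intro w hw ii
    refine Finset.prod_nonneg fun m _ => ?_
    rcases eq_or_ne m i with rfl | hm
    · simpa using hw _
    · simpa [hm] using ht m _
  simp only [Xi, Finset.smul_sum, smul_smul, ← Finset.sum_add_distrib, ← add_smul]
  refine Finset.sum_congr rfl fun ii _ => ?_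
  rw [prod_update_apply_add_smul, ← ENNReal.ofReal_mul ha, ← ENNReal.ofReal_mul hb,
    ← ENNReal.ofReal_add (mul_nonneg ha (hprod u hu ii)) (mul_nonneg hb (hprod v hv ii))]

variable [MetricSpace X] [BorelSpace X]

lemma mSupport_Xi (t : J → Fin k → ℝ) :
    mSupport (Xi k x t) = x '' {ii | 0 < ∏ m, t m (ii m)} := by
  simp only [Xi, mSupport_sum_smul_dirac, ne_eq, ENNReal.ofReal_eq_zero, not_le]

lemma suppUnion_cubeFaceSet (I : Finset (Fin k)) (i : J) :
    suppUnion k x (cubeFaceSet k I i) = x '' {ii | ii i ∈ I} := by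
  apply subset_antisymm
  · simp only [suppUnion, mSupport_Xi, Set.iUnion₂_subset_iff]
    rintro t ⟨-, -, htI⟩ _ ⟨ii, hii, rfl⟩
    refine ⟨ii, ?_, rfl⟩
    by_contra hiiI
    exact hii.ne' <|
      Finset.prod_eq_zero (f := fun m => t m (ii m)) (Finset.mem_univ i) (htI _ hiiI)
  · -- the vertex `(δ_{ii m})_m` of the cube face charges exactly the point `x ii`
    rintro _ ⟨ii, hii : ii i ∈ I, rfl⟩
    refine Set.mem_biUnion (x := fun m => Pi.single (ii m) 1)
      ⟨fun m => single_mem_stdSimplex ℝ (ii m), single_mem_stdSimplex ℝ (ii i), fun j hj => ?_⟩ ?_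
    · exact Pi.single_eq_of_ne (ne_of_mem_of_not_mem hii hj).symm 1
    · rw [mSupport_Xi]
      exact ⟨ii, by simp, rfl⟩

lemma Xi_apply_suppUnion_cubeFaceSet (hx : Function.Injective x) {t : J → Fin k → ℝ}
    (ht : ∀ m, t m ∈ stdSimplex ℝ (Fin k)) (I : Finset (Fin k)) (i : J) :
    Xi k x t (suppUnion k x (cubeFaceSet k I i)) = ENNReal.ofReal (∑ j ∈ I, t i j) := by
  rw [suppUnion_cubeFaceSet, Xi, sum_smul_dirac_apply_image hx, ← ENNReal.ofReal_sum_of_nonneg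
    fun ii _ => Finset.prod_nonneg fun m _ => (ht m).1 (ii m)]
  simp only [Set.mem_ofPred_eq]
  convert congrArg ENNReal.ofReal (sum_filter_prod_eq_sum t i (fun m _ => (ht m).2) I)

end Xi

theorem xi_face_decomposition_general (k : ℕ)
    (x : (J → Fin k) → X) (hx : Function.Injective x)
    (t : J → Fin k → ℝ) (ht : ∀ m : J, t m ∈ stdSimplex ℝ (Fin k))
    (I : Finset (Fin k)) (hI : I.Nonempty) (hIc : Iᶜ.Nonempty) (i : J) :
    ∃ lam ∈ Set.Icc (0 : ℝ) 1, ∃ t' ∈ cubeFaceSet (J := J) k I i,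
      ∃ t'' ∈ cubeFaceSet (J := J) k Iᶜ i,
      Xi k x t = ENNReal.ofReal lam • Xi k x t'
          + ENNReal.ofReal (1 - lam) • Xi k x t'' ∧
      Xi k x t (suppUnion k x (cubeFaceSet k I i)) = ENNReal.ofReal lam ∧
      Xi k x t (suppUnion k x (cubeFaceSet k Iᶜ i)) = ENNReal.ofReal (1 - lam) := by
  obtain ⟨u, hu, v, hv, hsplit⟩ := exists_simplexFace_decomposition (ht i) hI hIc
  have hcompl : ∑ j ∈ Iᶜ, t i j = 1 - ∑ j ∈ I, t i j := by
    rw [← (ht i).2, ← Finset.sum_add_sum_compl I]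
    ring
  have hI_nonneg : 0 ≤ ∑ j ∈ I, t i j := Finset.sum_nonneg fun j _ => (ht i).1 j
  have hIc_nonneg : 0 ≤ ∑ j ∈ Iᶜ, t i j := Finset.sum_nonneg fun j _ => (ht i).1 j
  refine ⟨∑ j ∈ I, t i j, ⟨hI_nonneg, by linarith⟩, _, update_mem_cubeFaceSet ht hu,
    _, update_mem_cubeFaceSet ht hv, ?_, Xi_apply_suppUnion_cubeFaceSet hx ht I i,
    hcompl ▸ Xi_apply_suppUnion_cubeFaceSet hx ht Iᶜ i⟩
  conv_lhs => rw [← Function.update_eq_self i t, hsplit]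
  exact Xi_update_add_smul (fun m => (ht m).1) i hu.1.1 hv.1.1 hI_nonneg (hcompl ▸ hIc_nonneg)

/-- Decomposition of measures in the image of `Ξ` along a cube face and its opposite,
with coefficient given by the measure of the union of supports. -/
theorem xi_face_decomposition (k : ℕ) (hk : 1 ≤ k)
    (x : (J → Fin k) → X) (hx : Function.Injective x)
    (t : J → Fin k → ℝ) (ht : ∀ m : J, t m ∈ stdSimplex ℝ (Fin k))
    (I : Finset (Fin k)) (hI : I.Nonempty) (hIc : Iᶜ.Nonempty) (i : J) :
    ∃ lam ∈ Set.Icc (0 : ℝ) 1, ∃ t' ∈ cubeFaceSet (J := J) k I i,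
      ∃ t'' ∈ cubeFaceSet (J := J) k Iᶜ i,
      Xi k x t = ENNReal.ofReal lam • Xi k x t'
          + ENNReal.ofReal (1 - lam) • Xi k x t'' ∧
      Xi k x t (suppUnion k x (cubeFaceSet k I i)) = ENNReal.ofReal lam ∧
      Xi k x t (suppUnion k x (cubeFaceSet k Iᶜ i)) = ENNReal.ofReal (1 - lam) :=
  xi_face_decomposition_general k x hx t ht I hI hIc i
end
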